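/- Let ε ∈ ℂ satisfy ε³ = 1, and consider the affine cubic f(x,y) = (ε/3)·(−x² − xy² + y) + (x³ − xy + y³) ∈ ℂ[x,y]. Then at the point (x₀, y₀) = ((2/5)ε, (1/5)ε²) one has f(x₀,y₀) = 0, ∂f/∂x(x₀,y₀) = 0, ∂f/∂y(x₀,y₀) = 0, and the Hessian determinant (∂²f/∂x²)(∂²f/∂y²) − (∂²f/∂x∂y)² is nonzero at (x₀,y₀); in other words, the cubic curve f = 0 has a node at (x₀,y₀). -/
import Mathlib


namespace ClassicalZariski.Stmt12
open MvPolynomial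

/-- The affine cubic `f(x,y) = (ε/3)·(−x² − xy² + y) + (x³ − xy + y³)`, with
variables `x = X 0` and `y = X 1`. -/
noncomputable def f (ε : ℂ) : MvPolynomial (Fin 2) ℂ :=
  C (ε / 3) * (-(X 0) ^ 2 - X 0 * (X 1) ^ 2 + X 1) +
    ((X 0) ^ 3 - X 0 * X 1 + (X 1) ^ 3)

lemma pderiv_natCast (i : Fin 2) (n : ℕ) :
    pderiv i ((n : MvPolynomial (Fin 2) ℂ)) = 0 := by
  rw [← map_natCast (C : ℂ →+* MvPolynomial (Fin 2) ℂ) n]; exact pderiv_C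

lemma pderiv_ofNat (i : Fin 2) (n : ℕ) [n.AtLeastTwo] :
    pderiv i (OfNat.ofNat n : MvPolynomial (Fin 2) ℂ) = 0 := by
  rw [← map_ofNat (C : ℂ →+* MvPolynomial (Fin 2) ℂ) n]; exact pderiv_C

theorem node (ε : ℂ) (hε : ε ^ 3 = 1) :
    let P : Fin 2 → ℂ := ![2 / 5 * ε, 1 / 5 * ε ^ 2]
    eval P (f ε) = 0 ∧
    eval P (pderiv 0 (f ε)) = 0 ∧
    eval P (pderiv 1 (f ε)) = 0 ∧
    eval P (pderiv 0 (pderiv 0 (f ε))) * eval P (pderiv 1 (pderiv 1 (f ε))) -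
      (eval P (pderiv 0 (pderiv 1 (f ε)))) ^ 2 ≠ 0 := by
  intro P
  have h0 : P 0 = 2 / 5 * ε := rfl
  have h1 : P 1 = 1 / 5 * ε ^ 2 := rfl
  simp only [f, map_add, map_sub, map_neg, pderiv_mul, pderiv_pow, pderiv_C,
    pderiv_X_self, pderiv_X_of_ne (show (1 : Fin 2) ≠ 0 by decide),
    pderiv_X_of_ne (show (0 : Fin 2) ≠ 1 by decide),
    eval_add, eval_mul, eval_sub, eval_neg, eval_pow, eval_C, eval_X, eval_zero, pderiv_ofNat, pderiv_natCast, pderiv_one,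
    map_natCast, eval_ofNat, h0, h1]
  norm_num
  refine ⟨by linear_combination (ε ^ 3 / 375) * hε,
          by linear_combination (-ε ^ 2 / 75) * hε,
          by linear_combination (ε / 15) * hε, ?_⟩
  intro hcon
  have : (1 : ℂ) / 3 = 0 := by
    linear_combination hcon + (4 / 225 * ε ^ 3 - 4 / 3) * hε
  norm_num at this

end ClassicalZariski.Stmt12
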